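/- Let ρ : ℝ² → ℝ be differentiable. If for every k = (k₁, k₂) ∈ ℤ² and every θ ∈ ℝ² the gradient of ρ is orthogonal to both A_k and B_k at θ, i.e. ⟨∇ρ(θ), A_k(θ)⟩ = 0 and ⟨∇ρ(θ), B_k(θ)⟩ = 0, then ∇ρ(θ) = (0,0) for every θ ∈ ℝ², and consequently ρ is constant on ℝ². -/
import Mathlib

/-- The gradient `(∂₁ρ θ, ∂₂ρ θ)` of a function `ρ : ℝ² → ℝ`. -/
noncomputable def grad2 (ρ : ℝ × ℝ → ℝ) (θ : ℝ × ℝ) : ℝ × ℝ :=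
  (fderiv ℝ ρ θ (1, 0), fderiv ℝ ρ θ (0, 1))

/-- The Euclidean inner product on `ℝ²`. -/
def dot2 (a b : ℝ × ℝ) : ℝ := a.1 * b.1 + a.2 * b.2

/-- The divergence-free vector field `A_k (θ) = (k₂ cos (k⬝θ), −k₁ cos (k⬝θ))` on `ℝ²`. -/
noncomputable def fieldA (k : ℤ × ℤ) (θ : ℝ × ℝ) : ℝ × ℝ :=
  ((k.2 : ℝ) * Real.cos (k.1 * θ.1 + k.2 * θ.2),
    -(k.1 : ℝ) * Real.cos (k.1 * θ.1 + k.2 * θ.2))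

/-- The divergence-free vector field `B_k (θ) = (k₂ sin (k⬝θ), −k₁ sin (k⬝θ))` on `ℝ²`. -/
noncomputable def fieldB (k : ℤ × ℤ) (θ : ℝ × ℝ) : ℝ × ℝ :=
  ((k.2 : ℝ) * Real.sin (k.1 * θ.1 + k.2 * θ.2),
    -(k.1 : ℝ) * Real.sin (k.1 * θ.1 + k.2 * θ.2))

/-- Let `ρ : ℝ² → ℝ` be differentiable. If for every `k ∈ ℤ²` and every
`θ ∈ ℝ²` the gradient of `ρ` is orthogonal to both `A_k` and `B_k` at `θ`, then
`∇ρ (θ) = (0, 0)` for every `θ`, and consequently `ρ` is constant on `ℝ²`. -/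
theorem gradient_orthogonal_AB_implies_const (ρ : ℝ × ℝ → ℝ) (hρ : Differentiable ℝ ρ)
    (hA : ∀ (k : ℤ × ℤ) (θ : ℝ × ℝ), dot2 (grad2 ρ θ) (fieldA k θ) = 0)
    (hB : ∀ (k : ℤ × ℤ) (θ : ℝ × ℝ), dot2 (grad2 ρ θ) (fieldB k θ) = 0) :
    (∀ θ : ℝ × ℝ, grad2 ρ θ = (0, 0)) ∧ ∀ θ θ' : ℝ × ℝ, ρ θ = ρ θ' := by
  have hg : ∀ θ : ℝ × ℝ, grad2 ρ θ = (0, 0) := by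
    intro θ
    have h1c := hA ((1 : ℤ), (0 : ℤ)) θ
    have h1s := hB ((1 : ℤ), (0 : ℤ)) θ
    have h2c := hA ((0 : ℤ), (1 : ℤ)) θ
    have h2s := hB ((0 : ℤ), (1 : ℤ)) θ
    simp only [dot2, fieldA, fieldB, grad2] at h1c h1s h2c h2s ⊢
    push_cast at h1c h1s h2c h2s
    norm_num at h1c h1s h2c h2s
    have hsc1 := Real.sin_sq_add_cos_sq θ.1
    have hsc2 := Real.sin_sq_add_cos_sq θ.2
    rw [Prod.mk.injEq]
    constructor
    · rcases h2c with h | hc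
      · exact h
      rcases h2s with h | hs
      · exact h
      rw [hc, hs] at hsc2; norm_num at hsc2
    · rcases h1c with h | hc
      · exact h
      rcases h1s with h | hs
      · exact h
      rw [hc, hs] at hsc1; norm_num at hsc1
  refine ⟨hg, fun θ θ' => ?_⟩
  have hf : ∀ x : ℝ × ℝ, fderiv ℝ ρ x = 0 := by
    intro x
    refine ContinuousLinearMap.ext fun v => ?_
    have h := hg x
    simp only [grad2, Prod.mk.injEq] at h
    have hv : v = v.1 • ((1 : ℝ), (0 : ℝ)) + v.2 • ((0 : ℝ), (1 : ℝ)) := by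
      simp [Prod.ext_iff]
    conv_lhs => rw [hv]
    rw [map_add, map_smul, map_smul, h.1, h.2]
    simp
  exact is_const_of_fderiv_eq_zero hρ hf θ θ'
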